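/- Let μ, ν be weights in a standard parabolic proper face F_I of the weight polytope with μ < ν. Then there exist simple roots α_{i_1},…,α_{i_k} with indices in the complement of I such that ν = μ + α_{i_1} + ⋯ + α_{i_k} and each partial sum μ + α_{i_1} + ⋯ + α_{i_s} (1 ≤ s ≤ k) is a weight in F_I. -/

import Mathlib

/-!
Write `ν - μ = ∑ aⱼ αⱼ` with `aⱼ ∈ ℕ`. Since `0 < ‖ν - μ‖² = ∑ aⱼ ⟪ν - μ, αⱼ⟫`, some `i` with
`aᵢ > 0` has `⟨μ, αᵢ^∨⟩ < ⟨ν, αᵢ^∨⟩`, and `i ∉ I` because `μ` and `ν` have the same coefficients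
on `I`. Both pairings are integers, so `⟨ν, αᵢ^∨⟩ ≥ 1` or `⟨μ, αᵢ^∨⟩ ≤ -1`; accordingly `ν - αᵢ`
or `μ + αᵢ` lies on the segment from that weight to its image under `sᵢ`, hence in the
`W`-stable convex polytope, and it is again a weight of `F_I`. Induction on `∑ aⱼ` then builds
the chain, extending it at whichever end the step was taken.
-/

open RealInnerProductSpace

noncomputable section

variable {E : Type*} [NormedAddCommGroup E] [InnerProductSpace ℝ E] [FiniteDimensional ℝ E]

/-- Reflection in the hyperplane orthogonal to `β`. -/
def sref (β : E) : E ≃ₗᵢ[ℝ] E := Submodule.reflection (ℝ ∙ β)ᗮ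

/-- Data of a system of simple roots of a (crystallographic, irreducible) root system:
the simple roots form a basis of the euclidean space, Cartan integers are integral,
distinct simple roots have nonpositive inner products, and the Dynkin diagram is connected. -/
structure RootData (n : ℕ) (E : Type*) [NormedAddCommGroup E] [InnerProductSpace ℝ E] where
  α : Fin n → E
  b : Module.Basis (Fin n) ℝ E
  hb : ∀ i, b i = α i
  cartan : ∀ i j, ∃ z : ℤ, (z : ℝ) * ⟪α j, α j⟫ = 2 * ⟪α i, α j⟫
  offdiag : ∀ i j : Fin n, i ≠ j → ⟪α i, α j⟫ ≤ 0
  conn : ∀ i j : Fin n, Relation.ReflTransGen (fun a b => a ≠ b ∧ ⟪α a, α b⟫ ≠ 0) i j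

namespace RootData

variable {n : ℕ} (S : RootData n E)

/-- The simple reflections. -/
def s (i : Fin n) : E ≃ₗᵢ[ℝ] E := sref (S.α i)

/-- The Weyl group, generated by the simple reflections. -/
def W : Subgroup (E ≃ₗᵢ[ℝ] E) := Subgroup.closure (Set.range S.s)

/-- The standard parabolic subgroup generated by the simple reflections indexed by `I`. -/
def WI (I : Set (Fin n)) : Subgroup (E ≃ₗᵢ[ℝ] E) := Subgroup.closure (S.s '' I)

/-- The set of roots:  the Weyl group orbit of the simple roots. -/
def roots : Set E := {β | ∃ w ∈ S.W, ∃ i, β = w (S.α i)}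

/-- `x` is dominant: nonnegative inner product with every simple root. -/
def Dominant (x : E) : Prop := ∀ i, 0 ≤ ⟪x, S.α i⟫

/-- The dominant weight `λ = Σ mᵢ αᵢ` (with nonnegative integer coefficients). -/
def lam (m : Fin n → ℕ) : E := ∑ j, (m j : ℝ) • S.α j

/-- `λ` is an integral weight: `2(λ,αᵢ)/(αᵢ,αᵢ)` is a (nonnegative) integer. -/
def IntegralDom (m : Fin n → ℕ) : Prop :=
  ∀ i, ∃ z : ℕ, (z : ℝ) * ⟪S.α i, S.α i⟫ = 2 * ⟪S.lam m, S.α i⟫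

/-- The Weyl group orbit of a point. -/
def orbit (x : E) : Set E := (fun w : E ≃ₗᵢ[ℝ] E => w x) '' (S.W : Set (E ≃ₗᵢ[ℝ] E))

/-- The weight polytope: the convex hull of the Weyl group orbit of `λ`. -/
def poly (m : Fin n → ℕ) : Set E := convexHull ℝ (S.orbit (S.lam m))

/-- `c μ i` is the coefficient of `αᵢ` when `μ` is expressed in the basis of simple roots. -/
def c (μ : E) (i : Fin n) : ℝ := S.b.repr μ i

/-- The set of weights `P(λ)`:  points of the weight polytope lying in the root lattice. -/
def Pw (m : Fin n → ℕ) : Set E := {μ ∈ S.poly m | ∀ i, ∃ z : ℤ, S.c μ i = z}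

/-- `P_I`: the weights whose `αᵢ`-coefficient equals `mᵢ` for all `i ∈ I`. -/
def P_ (m : Fin n → ℕ) (I : Set (Fin n)) : Set E :=
  {μ ∈ S.Pw m | ∀ i ∈ I, S.c μ i = m i}

/-- The standard parabolic face `F_I` of the weight polytope. -/
def F_ (m : Fin n → ℕ) (I : Set (Fin n)) : Set E :=
  {x ∈ S.poly m | ∀ i ∈ I, S.c x i = m i}

/-- The dominance order: `μ ≤ ν` iff `ν - μ` is a nonnegative integral sum of simple roots. -/
def wle (μ ν : E) : Prop := ∃ a : Fin n → ℕ, ν - μ = ∑ i, (a i : ℝ) • S.α i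

/-- Adjacency in the extended Dynkin diagram with extra node `-λ` (encoded as `none`). -/
def adj (m : Fin n → ℕ) : Option (Fin n) → Option (Fin n) → Prop
  | none, none => False
  | none, some j => 0 < ⟪S.lam m, S.α j⟫
  | some i, none => 0 < ⟪S.lam m, S.α i⟫
  | some i, some j => i ≠ j ∧ ⟪S.α i, S.α j⟫ ≠ 0

/-- One step in the extended Dynkin diagram, staying within the vertices `{-λ} ∪ {αₖ : k ∈ K}`. -/
def within (m : Fin n → ℕ) (K : Set (Fin n)) (a b : Option (Fin n)) : Prop :=
  S.adj m a b ∧ (∀ i, a = some i → i ∈ K) ∧ (∀ i, b = some i → i ∈ K)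

/-- `I̅⁰`: indices of the simple roots in the connected component of `-λ` in the subdiagram
of the extended Dynkin diagram on the complement of `I` together with `-λ`. -/
def comp0 (m : Fin n → ℕ) (I : Set (Fin n)) : Set (Fin n) :=
  {j | j ∉ I ∧ Relation.ReflTransGen (S.within m Iᶜ) none (some j)}

/-- The subdiagram of the extended Dynkin diagram on `{-λ} ∪ {αₖ : k ∈ K}` is connected. -/
def ConnWith (m : Fin n → ℕ) (K : Set (Fin n)) : Prop :=
  ∀ j ∈ K, Relation.ReflTransGen (S.within m K) none (some j)

/-- `ω` is the `i`-th fundamental coweight: `(ω, αⱼ) = δᵢⱼ`. -/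
def IsCoweight (i : Fin n) (ω : E) : Prop :=
  ∀ j, ⟪ω, S.α j⟫ = if j = i then 1 else 0

end RootData

variable {n : ℕ}

section

omit [FiniteDimensional ℝ E]

theorem exists_pos_inner_of_sum_smul_ne_zero {ι : Type*} [Fintype ι] (w : ι → E) {a : ι → ℝ}
    (ha : ∀ i, 0 ≤ a i) (h : ∑ i, a i • w i ≠ 0) :
    ∃ i, 0 < a i ∧ 0 < ⟪∑ j, a j • w j, w i⟫ := by
  have hv : ⟪∑ j, a j • w j, ∑ j, a j • w j⟫ = ∑ i, a i * ⟪∑ j, a j • w j, w i⟫ := by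
    rw [inner_sum]
    simp only [real_inner_smul_right]
  obtain ⟨i, -, hi⟩ := Finset.exists_lt_of_sum_lt (s := Finset.univ) (f := 0)
    (g := fun i => a i * ⟪∑ j, a j • w j, w i⟫) (by simpa [← hv] using real_inner_self_pos.2 h)
  have hai : 0 < a i := (ha i).lt_of_ne (by rintro h0; simp [← h0] at hi)
  exact ⟨i, hai, pos_of_mul_pos_right hi hai.le⟩

def AddStep {ι M : Type*} [Add M] (v : ι → M) (J : Set ι) (P : Set M) (x y : M) : Prop :=
  ∃ i ∈ J, y = x + v i ∧ y ∈ P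

theorem Fin.sum_filter_le_castSucc {M : Type*} [AddCommMonoid M] {k : ℕ} (g : Fin (k + 1) → M)
    (s : Fin k) :
    ∑ t ∈ Finset.univ.filter (· ≤ s.castSucc), g t =
      ∑ t ∈ Finset.univ.filter (· ≤ s), g t.castSucc := by
  simp only [Finset.sum_filter, Fin.sum_univ_castSucc, Fin.castSucc_le_castSucc_iff]
  simp [(Fin.castSucc_lt_last s).not_ge]

theorem Relation.ReflTransGen.exists_partial_sums_of_addStep {ι M : Type*} [AddCommMonoid M]
    {v : ι → M} {J : Set ι} {P : Set M} {μ ν : M} (h : Relation.ReflTransGen (AddStep v J P) μ ν) :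
    ∃ (k : ℕ) (f : Fin k → ι), (∀ s, f s ∈ J) ∧ ν = μ + ∑ s, v (f s) ∧
      ∀ s : Fin k, μ + ∑ t ∈ Finset.univ.filter (fun t => t ≤ s), v (f t) ∈ P := by
  induction h with
  | refl => exact ⟨0, Fin.elim0, fun s => s.elim0, by simp, fun s => s.elim0⟩
  | tail _ hstep ih =>
    obtain ⟨i, hi, rfl, hy⟩ := hstep
    obtain ⟨k, f, hfJ, rfl, hpart⟩ := ih
    refine ⟨k + 1, Fin.snoc f i, Fin.lastCases (by simpa) (by simpa), ?_, ?_⟩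
    · simp [Fin.sum_univ_castSucc, add_assoc]
    · refine Fin.lastCases ?_ fun s => ?_
      · simpa [Fin.le_last, Fin.sum_univ_castSucc, add_assoc] using hy
      · simpa [Fin.sum_filter_le_castSucc] using hpart s

namespace RootData

variable (S : RootData n E)

/-- The pairing `⟨x, αᵢ^∨⟩` of `x` with the coroot of `αᵢ`. -/
def pairing (x : E) (i : Fin n) : ℝ := 2 * ⟪x, S.α i⟫ / ⟪S.α i, S.α i⟫

theorem inner_α_self_pos (i : Fin n) : 0 < ⟪S.α i, S.α i⟫ :=
  real_inner_self_pos.2 (S.hb i ▸ S.b.ne_zero i)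

theorem s_apply (i : Fin n) (x : E) : S.s i x = x - S.pairing x i • S.α i := by
  have hα : ⟪S.α i, S.α i⟫ ≠ 0 := (S.inner_α_self_pos i).ne'
  rw [s, sref, Submodule.reflection_orthogonal_apply, Submodule.reflection_singleton_apply]
  simp only [RCLike.ofReal_real_eq_id, id_eq]
  rw [← real_inner_self_eq_norm_sq, pairing, real_inner_comm]
  match_scalars <;> field_simp

theorem c_sum_smul (a : Fin n → ℝ) (i : Fin n) : S.c (∑ j, a j • S.α j) i = a i := by
  simp [c, ← S.hb, Finsupp.single_apply]

theorem exists_int_pairing {x : E} (hx : ∀ j, ∃ z : ℤ, S.c x j = z) (i : Fin n) :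
    ∃ z : ℤ, S.pairing x i = z := by
  choose z hz using hx
  choose Z hZ using S.cartan
  have hα : ⟪S.α i, S.α i⟫ ≠ 0 := (S.inner_α_self_pos i).ne'
  have hx : x = ∑ j, (z j : ℝ) • S.α j := by
    conv_lhs => rw [← S.b.sum_repr x]
    exact Finset.sum_congr rfl fun j _ => by rw [← S.hb, ← hz j, c]
  refine ⟨∑ j, z j * Z j i, ?_⟩
  rw [pairing, hx, sum_inner, div_eq_iff hα, Finset.mul_sum]
  push_cast
  rw [Finset.sum_mul]
  refine Finset.sum_congr rfl fun j _ => ?_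
  rw [real_inner_smul_left, mul_assoc, hZ]
  ring

theorem s_mem_poly (m : Fin n → ℕ) (i : Fin n) {x : E} (hx : x ∈ S.poly m) :
    S.s i x ∈ S.poly m := by
  have horbit : S.s i '' S.orbit (S.lam m) ⊆ S.orbit (S.lam m) := by
    rintro _ ⟨_, ⟨w, hw, rfl⟩, rfl⟩
    exact ⟨S.s i * w, mul_mem (Subgroup.subset_closure ⟨i, rfl⟩) hw, rfl⟩
  have himage := ((S.s i).toLinearEquiv.toLinearMap.image_convexHull
    (S.orbit (S.lam m))).subset (Set.mem_image_of_mem _ hx)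
  exact convexHull_mono horbit himage

theorem sub_α_mem_poly (m : Fin n → ℕ) (i : Fin n) {x : E} (hx : x ∈ S.poly m)
    (h : 1 ≤ S.pairing x i) : x - S.α i ∈ S.poly m := by
  have hmem : x + (S.pairing x i)⁻¹ • (S.s i x - x) ∈ S.poly m :=
    (convex_convexHull ℝ _).add_smul_sub_mem hx (S.s_mem_poly m i hx)
      ⟨by positivity, inv_le_one_of_one_le₀ h⟩
  convert hmem using 1
  rw [s_apply]
  match_scalars <;> field_simp
  ring

theorem add_α_mem_poly (m : Fin n → ℕ) (i : Fin n) {x : E} (hx : x ∈ S.poly m)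
    (h : S.pairing x i ≤ -1) : x + S.α i ∈ S.poly m := by
  have hmem : x + (-S.pairing x i)⁻¹ • (S.s i x - x) ∈ S.poly m :=
    (convex_convexHull ℝ _).add_smul_sub_mem hx (S.s_mem_poly m i hx)
      ⟨inv_nonneg.2 (by linarith), inv_le_one_of_one_le₀ (by linarith)⟩
  convert hmem using 1
  rw [s_apply]
  have : S.pairing x i ≠ 0 := by linarith
  match_scalars <;> field_simp
  ring

theorem add_zsmul_α_mem_P_ {m : Fin n → ℕ} {I : Set (Fin n)} {μ : E} (hμ : μ ∈ S.P_ m I)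
    {i : Fin n} (hi : i ∉ I) (z : ℤ) (hpoly : μ + (z : ℝ) • S.α i ∈ S.poly m) :
    μ + (z : ℝ) • S.α i ∈ S.P_ m I := by
  obtain ⟨⟨-, hint⟩, hface⟩ := hμ
  have hc : ∀ j, S.c (μ + (z : ℝ) • S.α i) j = S.c μ j + if i = j then (z : ℝ) else 0 := by
    intro j
    simp [c, ← S.hb, Finsupp.single_apply]
  refine ⟨⟨hpoly, fun j => ?_⟩, fun j hj => ?_⟩
  · obtain ⟨w, hw⟩ := hint j
    exact ⟨w + if i = j then z else 0, by rw [hc, hw]; split_ifs <;> simp⟩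
  · rw [hc, hface j hj, if_neg (by rintro rfl; exact hi hj), add_zero]

theorem exists_add_α_mem_P_or_sub_α_mem_P_ {m : Fin n → ℕ} {I : Set (Fin n)} {μ ν : E}
    (hμ : μ ∈ S.P_ m I) (hν : ν ∈ S.P_ m I) {a : Fin n → ℕ}
    (ha : ν - μ = ∑ j, (a j : ℝ) • S.α j) (hne : μ ≠ ν) :
    ∃ i, a i ≠ 0 ∧ i ∉ I ∧ (μ + S.α i ∈ S.P_ m I ∨ ν - S.α i ∈ S.P_ m I) := by
  obtain ⟨i, hai, hinner⟩ := exists_pos_inner_of_sum_smul_ne_zero S.α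
    (fun j => Nat.cast_nonneg (a j)) (ha ▸ sub_ne_zero.2 hne.symm)
  rw [← ha, inner_sub_left, sub_pos] at hinner
  have hiI : i ∉ I := fun hi => by
    have hc := S.c_sum_smul (fun j => (a j : ℝ)) i
    rw [← ha, show S.c (ν - μ) i = S.c ν i - S.c μ i by simp [c], hν.2 i hi, hμ.2 i hi,
      sub_self] at hc
    linarith
  have hlt : S.pairing μ i < S.pairing ν i := by
    have := S.inner_α_self_pos i
    unfold pairing
    gcongr
  obtain ⟨zμ, hzμ⟩ := S.exists_int_pairing hμ.1.2 i
  obtain ⟨zν, hzν⟩ := S.exists_int_pairing hν.1.2 i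
  rw [hzμ, hzν, Int.cast_lt] at hlt
  refine ⟨i, by exact_mod_cast hai.ne', hiI, ?_⟩
  rcases le_or_gt 1 zν with hzν1 | hzν1
  · right
    have := S.add_zsmul_α_mem_P_ hν hiI (-1) ?_
    · simpa [← sub_eq_add_neg] using this
    · simpa [← sub_eq_add_neg] using
        S.sub_α_mem_poly m i hν.1.1 (by rw [hzν]; exact_mod_cast hzν1)
  · left
    have := S.add_zsmul_α_mem_P_ hμ hiI 1 ?_
    · simpa using this
    · simpa using
        S.add_α_mem_poly m i hμ.1.1 (by rw [hzμ]; exact_mod_cast (by omega : zμ ≤ -1))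

theorem reflTransGen_addStep {m : Fin n → ℕ} {I : Set (Fin n)} {μ ν : E}
    (hμ : μ ∈ S.P_ m I) (hν : ν ∈ S.P_ m I) (hle : S.wle μ ν) :
    Relation.ReflTransGen (AddStep S.α Iᶜ (S.P_ m I)) μ ν := by
  obtain ⟨a, ha⟩ := hle
  induction hN : ∑ j, a j generalizing a μ ν with
  | zero =>
    obtain rfl : a = 0 := funext fun j => Finset.sum_eq_zero_iff.1 hN j (Finset.mem_univ j)
    obtain rfl : μ = ν := (sub_eq_zero.1 (by simpa using ha)).symm
    exact .refl
  | succ N ih =>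
    rcases eq_or_ne μ ν with rfl | hne
    · exact .refl
    obtain ⟨i, hai, hiI, hstep⟩ := S.exists_add_α_mem_P_or_sub_α_mem_P_ hμ hν ha hne
    obtain ⟨a', rfl⟩ : ∃ a', a = a' + Pi.single i 1 :=
      ⟨a - Pi.single i 1, funext fun j => by
        rcases eq_or_ne j i with rfl | hj
        · simp only [Pi.add_apply, Pi.sub_apply, Pi.single_eq_same]
          omega
        · simp [hj]⟩
    have hN' : ∑ j, a' j = N := by simpa [Finset.sum_add_distrib] using hN
    have ha' : ν - μ - S.α i = ∑ j, (a' j : ℝ) • S.α j := by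
      simp [ha, add_smul, Finset.sum_add_distrib, Pi.single_apply]
    rcases hstep with hup | hdown
    · exact .head ⟨i, hiI, rfl, hup⟩ (ih hup hν a' (by rw [← ha']; abel) hN')
    · exact .tail (ih hμ hdown a' (by rw [← ha']; abel) hN') ⟨i, hiI, by abel, hν⟩

end RootData

end

theorem chain_lemma_general (S : RootData n E) (m : Fin n → ℕ) (I : Set (Fin n))
    (μ ν : E) (hμ : μ ∈ S.P_ m I) (hν : ν ∈ S.P_ m I)
    (hlt : S.wle μ ν) :
    ∃ (k : ℕ) (f : Fin k → Fin n), (∀ s, f s ∉ I) ∧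
      ν = μ + ∑ s, S.α (f s) ∧
      ∀ s : Fin k, μ + ∑ t ∈ Finset.univ.filter (fun t => t ≤ s), S.α (f t) ∈ S.P_ m I :=
  (S.reflTransGen_addStep hμ hν hlt).exists_partial_sums_of_addStep

/-- if `μ < ν` are weights in a standard parabolic proper face `F_I`, then
`ν = μ + α_{i₁} + ⋯ + α_{i_k}` with all indices outside `I` and all partial sums weights
in `F_I`. -/
theorem chain_lemma (S : RootData n E) (m : Fin n → ℕ)
    (hdom : S.Dominant (S.lam m)) (hint : S.IntegralDom m) (I : Set (Fin n))
    (hproper : S.F_ m I ≠ S.poly m)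
    (μ ν : E) (hμ : μ ∈ S.P_ m I) (hν : ν ∈ S.P_ m I)
    (hlt : S.wle μ ν) (hne : μ ≠ ν) :
    ∃ (k : ℕ) (f : Fin k → Fin n), (∀ s, f s ∉ I) ∧
      ν = μ + ∑ s, S.α (f s) ∧
      ∀ s : Fin k, μ + ∑ t ∈ Finset.univ.filter (fun t => t ≤ s), S.α (f t) ∈ S.P_ m I :=
  chain_lemma_general S m I μ ν hμ hν hlt
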